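/- Let H = ℂ^{d_1} ⊗ ⋯ ⊗ ℂ^{d_N} with N ≥ 2 and all d_i ≥ 2, let D = dim H = ∏_i d_i, and let V ⊆ H be a linear subspace with dim V = u, 0 < u < D, whose orthogonal complement V^⊥ is a genuinely entangled subspace. Let P be the orthogonal projection onto V and set ε = inf{ ⟨ψ, Pψ⟩ : ψ a unit-norm biproduct vector in H }. Then: (a) ε > 0; (b) the Hermitian operator W = P − ε·𝟙 satisfies Tr(Wσ) ≥ 0 for every biseparable state σ on H; and (c) for the state ρ = (𝟙 − P)/(D − u), which is supported on V^⊥, one has Tr(Wρ) = −ε < 0. In particular W is a witness of genuine multipartite entanglement detecting ρ. -/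

import Mathlib

open scoped InnerProductSpace

noncomputable section

/-- The `N`-partite Hilbert space `ℂ^{d 1} ⊗ ⋯ ⊗ ℂ^{d N}`, realized as the Euclidean
space whose coordinates are indexed by tuples of local indices. -/
abbrev MParty {N : ℕ} (d : Fin N → ℕ) := EuclideanSpace ℂ (∀ i, Fin (d i))

/-- `v` is biproduct: for some bipartition `S|Sᶜ` of the parties, `v = φ ⊗ χ` with
`φ` a vector on the parties in `S` and `χ` a vector on the parties in `Sᶜ`
(under the canonical factor-reordering isomorphism). -/
def Biproduct {N : ℕ} {d : Fin N → ℕ} (v : MParty d) : Prop :=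
  ∃ S : Set (Fin N), S.Nonempty ∧ S ≠ Set.univ ∧
    ∃ (φ : ((i : S) → Fin (d i)) → ℂ) (χ : ((i : ↥Sᶜ) → Fin (d i)) → ℂ),
      ∀ f : ∀ i, Fin (d i), v f = φ (fun i => f i) * χ (fun i => f i)

/-- The rank-one operator `|ψ⟩⟨ψ| : x ↦ ⟪ψ, x⟫ • ψ`. -/
def rankOne {N : ℕ} {d : Fin N → ℕ} (ψ : MParty d) : MParty d →ₗ[ℂ] MParty d :=
  LinearMap.toSpanSingleton ℂ (MParty d) ψ ∘ₗ innerₛₗ ℂ ψ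

/-- A state `σ` is biseparable if it is a finite convex combination of rank-one projections
onto unit-norm biproduct vectors. -/
def Biseparable {N : ℕ} {d : Fin N → ℕ} (σ : MParty d →ₗ[ℂ] MParty d) : Prop :=
  ∃ (M : ℕ) (q : Fin M → ℝ) (ψ : Fin M → MParty d),
    (∀ j, 0 ≤ q j) ∧ (∑ j, q j) = 1 ∧
    (∀ j, ‖ψ j‖ = 1) ∧ (∀ j, Biproduct (ψ j)) ∧
    σ = ∑ j, (q j : ℂ) • rankOne (ψ j)

section Aux

open scoped Classical

variable {N : ℕ} {d : Fin N → ℕ}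

/-- Glue partial index assignments on `S` and `Sᶜ` into a full assignment. -/
def glue (S : Set (Fin N)) (a : (i : S) → Fin (d i)) (b : (i : ↥Sᶜ) → Fin (d i)) :
    ∀ i, Fin (d i) := fun i => if h : i ∈ S then a ⟨i, h⟩ else b ⟨i, h⟩

lemma glue_left (S : Set (Fin N)) (a : (i : S) → Fin (d i)) (b : (i : ↥Sᶜ) → Fin (d i)) :
    (fun i : S => glue S a b i) = a := by
  funext i; simp [glue, i.2]

lemma glue_right (S : Set (Fin N)) (a : (i : S) → Fin (d i)) (b : (i : ↥Sᶜ) → Fin (d i)) :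
    (fun i : ↥Sᶜ => glue S a b i) = b := by
  funext i
  have hi : ¬ ((i : Fin N) ∈ S) := i.2
  simp [glue, hi]

lemma glue_self (S : Set (Fin N)) (f : ∀ i, Fin (d i)) :
    glue S (fun i : S => f i) (fun i : ↥Sᶜ => f i) = f := by
  funext i; by_cases h : i ∈ S <;> simp [glue, h]

/-- The closed "rank-one across the bipartition `S`" condition. -/
def inC (S : Set (Fin N)) (v : MParty d) : Prop :=
  ∀ a a' b b', v (glue S a b) * v (glue S a' b') = v (glue S a b') * v (glue S a' b)

lemma inC_of_prod {v : MParty d} {S : Set (Fin N)}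
    (φ : ((i : S) → Fin (d i)) → ℂ) (χ : ((i : ↥Sᶜ) → Fin (d i)) → ℂ)
    (h : ∀ f : ∀ i, Fin (d i), v f = φ (fun i => f i) * χ (fun i => f i)) : inC S v := by
  intro a a' b b'
  have key : ∀ a b, v (glue S a b) = φ a * χ b := by
    intro a b; rw [h (glue S a b), glue_left, glue_right]
  simp only [key]; ring

lemma biproduct_of_inC {v : MParty d} {S : Set (Fin N)} (hS : S.Nonempty)
    (hS' : S ≠ Set.univ) (hC : inC S v) (hv : v ≠ 0) : Biproduct v := by
  have hex : ∃ f, v f ≠ 0 := by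
    by_contra h; push_neg at h; exact hv (PiLp.ext h)
  obtain ⟨f₀, hf₀⟩ := hex
  refine ⟨S, hS, hS', fun a => v (glue S a (fun i => f₀ i)),
    fun b => v (glue S (fun i => f₀ i) b) / v f₀, ?_⟩
  intro f
  have h1 := hC (fun i : S => f i) (fun i : S => f₀ i)
    (fun i : ↥Sᶜ => f i) (fun i : ↥Sᶜ => f₀ i)
  rw [glue_self, glue_self] at h1
  rw [← mul_div_assoc, eq_div_iff hf₀]
  linear_combination h1

lemma isClosed_inC (S : Set (Fin N)) : IsClosed {v : MParty d | inC S v} := by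
  have hcont : ∀ f : ∀ i, Fin (d i), Continuous fun v : MParty d => v f :=
    fun f => (EuclideanSpace.proj f).continuous
  have hset : {v : MParty d | inC S v} =
      ⋂ (a) (a') (b) (b'), {v : MParty d |
        v (glue S a b) * v (glue S a' b') = v (glue S a b') * v (glue S a' b)} := by
    ext v
    simp only [Set.mem_setOf_eq, Set.mem_iInter]
    exact Iff.rfl
  rw [hset]
  exact isClosed_iInter fun a => isClosed_iInter fun a' => isClosed_iInter fun b =>
    isClosed_iInter fun b' =>
      isClosed_eq ((hcont _).mul (hcont _)) ((hcont _).mul (hcont _))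

lemma isCompact_bipK :
    IsCompact {v : MParty d | ‖v‖ = 1 ∧
      ∃ S : Set (Fin N), S.Nonempty ∧ S ≠ Set.univ ∧ inC S v} := by
  have hset : {v : MParty d | ‖v‖ = 1 ∧
        ∃ S : Set (Fin N), S.Nonempty ∧ S ≠ Set.univ ∧ inC S v} =
      Metric.sphere (0 : MParty d) 1 ∩
        ⋃ (S : Set (Fin N)), {v : MParty d | (S.Nonempty ∧ S ≠ Set.univ) ∧ inC S v} := by
    ext v
    simp only [Set.mem_setOf_eq, Set.mem_inter_iff, mem_sphere_zero_iff_norm,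
      Set.mem_iUnion]
    tauto
  rw [hset]
  refine (isCompact_sphere 0 1).inter_right (isClosed_iUnion_of_finite fun S => ?_)
  by_cases hS : S.Nonempty ∧ S ≠ Set.univ
  · have : {v : MParty d | (S.Nonempty ∧ S ≠ Set.univ) ∧ inC S v}
        = {v : MParty d | inC S v} := by ext v; simp [hS]
    rw [this]; exact isClosed_inC S
  · have : {v : MParty d | (S.Nonempty ∧ S ≠ Set.univ) ∧ inC S v} = ∅ := by
      ext v; simp [hS]
    rw [this]; exact isClosed_empty

lemma restrict_eq_iff {S : Set (Fin N)} {f g : ∀ i, Fin (d i)}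
    (h1 : (fun i : S => f i) = (fun i : S => g i))
    (h2 : (fun i : ↥Sᶜ => f i) = (fun i : ↥Sᶜ => g i)) : f = g := by
  funext i
  by_cases hi : i ∈ S
  · exact congrFun h1 ⟨i, hi⟩
  · exact congrFun h2 ⟨i, hi⟩

lemma exists_biproduct_unit (hN : 2 ≤ N) (hd : ∀ i, 2 ≤ d i) :
    ∃ ψ : MParty d, Biproduct ψ ∧ ‖ψ‖ = 1 := by
  have hN0 : 0 < N := by omega
  set f₀ : ∀ i, Fin (d i) := fun i => ⟨0, by have := hd i; omega⟩ with hf₀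
  refine ⟨EuclideanSpace.single f₀ 1, ?_, by simp [EuclideanSpace.norm_single]⟩
  set S : Set (Fin N) := {(⟨0, by omega⟩ : Fin N)} with hS
  have hSne : S.Nonempty := ⟨_, rfl⟩
  have hSuniv : S ≠ Set.univ := by
    intro h
    have : (⟨1, by omega⟩ : Fin N) ∈ S := h ▸ Set.mem_univ _
    rw [hS, Set.mem_singleton_iff] at this
    exact absurd (congrArg Fin.val this) (by simp)
  classical
  refine ⟨S, hSne, hSuniv,
    fun a => if a = (fun i : S => f₀ i) then 1 else 0,
    fun b => if b = (fun i : ↥Sᶜ => f₀ i) then 1 else 0, ?_⟩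
  intro f
  by_cases hf : f = f₀
  · subst hf; simp [EuclideanSpace.single_apply]
  · have hne : (fun i : S => f i) ≠ (fun i : S => f₀ i) ∨
        (fun i : ↥Sᶜ => f i) ≠ (fun i : ↥Sᶜ => f₀ i) := by
      by_contra h
      push_neg at h
      exact hf (restrict_eq_iff h.1 h.2)
    rcases hne with h | h <;> simp [EuclideanSpace.single_apply, hf, h]

lemma trace_endo_complex (f : ℂ →ₗ[ℂ] ℂ) : LinearMap.trace ℂ ℂ f = f 1 := by
  have hf : f = f 1 • LinearMap.id := by
    apply LinearMap.ext_ring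
    simp
  rw [hf, map_smul, LinearMap.trace_id, Module.finrank_self]
  simp

lemma trace_comp_rankOne (A : MParty d →ₗ[ℂ] MParty d) (ψ : MParty d) :
    LinearMap.trace ℂ (MParty d) (A ∘ₗ rankOne ψ) = ⟪ψ, A ψ⟫_ℂ := by
  rw [rankOne, ← LinearMap.comp_assoc, LinearMap.trace_comp_comm', trace_endo_complex]
  simp [LinearMap.toSpanSingleton_apply]

end Aux

/-- Let `V` be a subspace of `H = ℂ^{d_1} ⊗ ⋯ ⊗ ℂ^{d_N}` of dimension `u`
with `0 < u < D = dim H`, whose orthocomplement is a genuinely entangled subspace. Let `P` be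
the orthogonal projection onto `V` and `ε = inf{⟨ψ, Pψ⟩ : ψ unit-norm biproduct}`. Then
(a) `ε > 0`; (b) `W = P − ε·𝟙` has nonnegative trace against every biseparable state; and
(c) the state `ρ = (𝟙 − P)/(D − u)` is supported on `Vᗮ` and satisfies `Tr(Wρ) = −ε`. -/
theorem stmt19 (N : ℕ) (hN : 2 ≤ N) (d : Fin N → ℕ) (hd : ∀ i, 2 ≤ d i)
    (V : Submodule ℂ (MParty d))
    (hu : 0 < Module.finrank ℂ V) (huD : Module.finrank ℂ V < ∏ i, d i)
    (hGES : ∀ v ∈ Vᗮ, v ≠ 0 → ¬ Biproduct v) :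
    let P : MParty d →ₗ[ℂ] MParty d := (V.subtypeL.comp (V.orthogonalProjectionOnto)).toLinearMap
    let ε : ℝ := sInf {t : ℝ | ∃ ψ : MParty d,
      Biproduct ψ ∧ ‖ψ‖ = 1 ∧ (⟪ψ, P ψ⟫_ℂ).re = t}
    let W : MParty d →ₗ[ℂ] MParty d := P - (ε : ℂ) • LinearMap.id
    let ρ : MParty d →ₗ[ℂ] MParty d :=
      (((∏ i, d i) - Module.finrank ℂ V : ℕ) : ℂ)⁻¹ • (LinearMap.id - P)
    0 < ε ∧
    (∀ σ : MParty d →ₗ[ℂ] MParty d, Biseparable σ →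
      ∃ t : ℝ, 0 ≤ t ∧ LinearMap.trace ℂ (MParty d) (W ∘ₗ σ) = (t : ℂ)) ∧
    (∀ x : MParty d, ρ x ∈ Vᗮ) ∧
    LinearMap.trace ℂ (MParty d) (W ∘ₗ ρ) = (-ε : ℂ) := by
  intro P ε W ρ
  -- basic facts about P
  have hPapp : ∀ x : MParty d, P x = (V.orthogonalProjectionOnto x : MParty d) := fun x => rfl
  have hPP : ∀ x : MParty d, P (P x) = P x := by
    intro x
    rw [hPapp, hPapp x, Submodule.orthogonalProjectionOnto_mem_subspace_eq_self]
  have hinner : ∀ ψ : MParty d, ⟪ψ, P ψ⟫_ℂ = ((‖P ψ‖ ^ 2 : ℝ) : ℂ) := by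
    intro ψ
    have h1 : ⟪(V.orthogonalProjectionOnto ψ : MParty d), P ψ⟫_ℂ =
        ⟪ψ, (V.orthogonalProjectionOnto (P ψ) : MParty d)⟫_ℂ :=
      V.inner_starProjection_left_eq_right ψ (P ψ)
    rw [← hPapp ψ, ← hPapp (P ψ), hPP ψ] at h1
    rw [← h1, inner_self_eq_norm_sq_to_K]
    norm_cast
  -- the compact set of unit biproduct vectors
  set K : Set (MParty d) := {v : MParty d | ‖v‖ = 1 ∧
      ∃ S : Set (Fin N), S.Nonempty ∧ S ≠ Set.univ ∧ inC S v} with hK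
  set T : Set ℝ := {t : ℝ | ∃ ψ : MParty d,
      Biproduct ψ ∧ ‖ψ‖ = 1 ∧ (⟪ψ, P ψ⟫_ℂ).re = t} with hT
  have hεdef : ε = sInf T := rfl
  have hTK : T = (fun v : MParty d => (⟪v, P v⟫_ℂ).re) '' K := by
    ext t
    constructor
    · rintro ⟨ψ, ⟨S, hS, hS', φ, χ, hprod⟩, hψ1, rfl⟩
      exact ⟨ψ, ⟨hψ1, S, hS, hS', inC_of_prod φ χ hprod⟩, rfl⟩
    · rintro ⟨ψ, ⟨hψ1, S, hS, hS', hC⟩, rfl⟩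
      exact ⟨ψ, biproduct_of_inC hS hS' hC (by intro h; rw [h] at hψ1; simp at hψ1),
        hψ1, rfl⟩
  have hgc : Continuous fun v : MParty d => (⟪v, P v⟫_ℂ).re := by
    have hPc : Continuous P := P.continuous_of_finiteDimensional
    exact Complex.continuous_re.comp (continuous_id.inner hPc)
  have hKc : IsCompact K := isCompact_bipK
  have hKne : K.Nonempty := by
    obtain ⟨ψ, ⟨S, hS, hS', φ, χ, hprod⟩, hψ1⟩ := exists_biproduct_unit hN hd
    exact ⟨ψ, hψ1, S, hS, hS', inC_of_prod φ χ hprod⟩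
  have hTc : IsCompact T := by rw [hTK]; exact hKc.image hgc
  have hTne : T.Nonempty := by rw [hTK]; exact hKne.image _
  have hTbdd : BddBelow T := hTc.bddBelow
  have hεT : ε ∈ T := hTc.sInf_mem hTne
  -- (a) ε > 0
  have hεpos : 0 < ε := by
    obtain ⟨ψ, hbip, hψ1, hψε⟩ := hεT
    have hψne : ψ ≠ 0 := by intro h; rw [h] at hψ1; simp at hψ1
    have hPψ : P ψ ≠ 0 := by
      intro h0
      have hmem : ψ ∈ Vᗮ := by
        have : ψ - (V.orthogonalProjectionOnto ψ : MParty d) ∈ Vᗮ :=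
            Submodule.sub_starProjection_mem_orthogonal (K := V) ψ
        rwa [← hPapp ψ, h0, sub_zero] at this
      exact hGES ψ hmem hψne hbip
    rw [← hψε, hinner ψ, Complex.ofReal_re]
    exact pow_pos (norm_pos_iff.mpr hPψ) 2
  -- trace of W against a unit vector
  have hWtr : ∀ ψ : MParty d, ‖ψ‖ = 1 →
      LinearMap.trace ℂ (MParty d) (W ∘ₗ rankOne ψ) = (((⟪ψ, P ψ⟫_ℂ).re - ε : ℝ) : ℂ) := by
    intro ψ hψ1
    rw [trace_comp_rankOne]
    have : W ψ = P ψ - (ε : ℂ) • ψ := rfl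
    rw [this, inner_sub_right, inner_smul_right, inner_self_eq_norm_sq_to_K, hψ1,
      hinner ψ, Complex.ofReal_re]
    push_cast
    ring
  refine ⟨hεpos, ?_, ?_, ?_⟩
  · -- (b)
    rintro σ ⟨M, q, ψ, hq0, hq1, hψn, hψb, rfl⟩
    refine ⟨∑ j, q j * ((⟪ψ j, P (ψ j)⟫_ℂ).re - ε), ?_, ?_⟩
    · refine Finset.sum_nonneg fun j _ => mul_nonneg (hq0 j) ?_
      have hmem : (⟪ψ j, P (ψ j)⟫_ℂ).re ∈ T := ⟨ψ j, hψb j, hψn j, rfl⟩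
      have := csInf_le hTbdd hmem
      rw [← hεdef] at this
      linarith
    · have hcomp : W ∘ₗ (∑ j, (q j : ℂ) • rankOne (ψ j))
          = ∑ j, (q j : ℂ) • (W ∘ₗ rankOne (ψ j)) := by
        ext x
        simp [LinearMap.sum_apply, map_sum]
      rw [hcomp, map_sum,
        show ((∑ j, q j * ((⟪ψ j, P (ψ j)⟫_ℂ).re - ε) : ℝ) : ℂ)
          = ∑ j, (((q j : ℝ) * ((⟪ψ j, P (ψ j)⟫_ℂ).re - ε) : ℝ) : ℂ) from by
            push_cast; ring]
      refine Finset.sum_congr rfl fun j _ => ?_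
      rw [map_smul, hWtr (ψ j) (hψn j), smul_eq_mul]
      push_cast
      ring
  · -- support of ρ
    intro x
    have hx : x - P x ∈ Vᗮ := by
      have : x - (V.orthogonalProjectionOnto x : MParty d) ∈ Vᗮ :=
          Submodule.sub_starProjection_mem_orthogonal (K := V) x
      rwa [← hPapp x] at this
    have : ρ x = (((∏ i, d i) - Module.finrank ℂ V : ℕ) : ℂ)⁻¹ • (x - P x) := rfl
    rw [this]
    exact Submodule.smul_mem _ _ hx
  · -- (c)
    have hPPc : P ∘ₗ P = P := LinearMap.ext hPP
    have htrP : LinearMap.trace ℂ (MParty d) P = (Module.finrank ℂ V : ℂ) := by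
      have hPeq : P = V.subtype ∘ₗ (V.orthogonalProjectionOnto).toLinearMap := rfl
      rw [hPeq, LinearMap.trace_comp_comm']
      have : (V.orthogonalProjectionOnto).toLinearMap ∘ₗ V.subtype = LinearMap.id := by
        ext v
        simp [Submodule.orthogonalProjectionOnto_mem_subspace_eq_self]
      rw [this, LinearMap.trace_id]
    have htrI : LinearMap.trace ℂ (MParty d) LinearMap.id = ((∏ i, d i : ℕ) : ℂ) := by
      rw [LinearMap.trace_id]
      norm_cast
      simp [finrank_euclideanSpace]
    have hWid : W ∘ₗ (LinearMap.id - P) = (-(ε : ℂ)) • (LinearMap.id - P) := by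
      have : W ∘ₗ (LinearMap.id - P)
          = (P - P ∘ₗ P) - (ε : ℂ) • (LinearMap.id - P) := by
        show (P - (ε : ℂ) • LinearMap.id) ∘ₗ (LinearMap.id - P) = _
        simp only [LinearMap.sub_comp, LinearMap.comp_sub, LinearMap.smul_comp,
          LinearMap.comp_id, LinearMap.id_comp, smul_sub]
        abel
      rw [this, hPPc, sub_self, zero_sub, neg_smul]
    have hWρ : W ∘ₗ ρ = ((((∏ i, d i) - Module.finrank ℂ V : ℕ) : ℂ)⁻¹ * (-(ε : ℂ))) •
        (LinearMap.id - P) := by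
      show W ∘ₗ ((((∏ i, d i) - Module.finrank ℂ V : ℕ) : ℂ)⁻¹ • (LinearMap.id - P)) = _
      rw [LinearMap.comp_smul, hWid, smul_smul]
    rw [hWρ, map_smul, map_sub, htrP, htrI, smul_eq_mul]
    have hc : (((∏ i, d i) - Module.finrank ℂ V : ℕ) : ℂ)
        = ((∏ i, d i : ℕ) : ℂ) - (Module.finrank ℂ V : ℂ) := by
      push_cast [Nat.cast_sub huD.le]
      ring
    have hcne : (((∏ i, d i) - Module.finrank ℂ V : ℕ) : ℂ) ≠ 0 := by
      rw [Nat.cast_ne_zero]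
      omega
    rw [← hc]
    field_simp
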